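/- arXiv:2511.20370 — 2 statements merged into one kernel-verified Lean document; each statement's English description precedes it below -/
import Mathlib

section
/- Let x : [0, ∞) → ℝⁿ be the unique global solution of ẋ(t) = −∇φ*(∇f(x(t))) with x(0) = x₀. If in addition φ is twice continuously differentiable on the interior of its domain, then ẋ(t) → 0 as t → ∞. -/
open MeasureTheory Filter Topology Set
open scoped RealInnerProductSpace

noncomputable section

variable {E : Type*} [NormedAddCommGroup E] [InnerProductSpace ℝ E] [CompleteSpace E]

lemma line_deriv (y d : E) (t : ℝ) : HasDerivAt (fun s : ℝ => y + s • d) d t := by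
  simpa using ((hasDerivAt_id t).smul_const d).const_add y

lemma comp_grad_deriv {h : E → ℝ} {g : E → E} (hg : ∀ y, HasGradientAt h (g y) y)
    (y d : E) (t : ℝ) :
    HasDerivAt (fun s : ℝ => h (y + s • d)) ⟪g (y + t • d), d⟫ t := by
  have := ((hg (y + t • d)).hasFDerivAt.comp_hasDerivAt t (line_deriv y d t))
  simpa [InnerProductSpace.toDual_apply_apply, Function.comp_def] using this

lemma g_cont {g : E → E} {L : ℝ} (lip : ∀ a b, ‖g a - g b‖ ≤ L * ‖a - b‖) :
    Continuous g := by
  have : LipschitzWith (⟨max L 0, le_max_right _ _⟩ : NNReal) g := by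
    apply LipschitzWith.of_dist_le_mul
    intro a b
    simp only [dist_eq_norm]
    calc ‖g a - g b‖ ≤ L * ‖a - b‖ := lip a b
    _ ≤ max L 0 * ‖a - b‖ := by
        apply mul_le_mul_of_nonneg_right (le_max_left _ _) (norm_nonneg _)
  exact this.continuous

/-- Descent lemma: L-Lipschitz gradient upper bound. -/
lemma descent {h : E → ℝ} {g : E → E} (hg : ∀ y, HasGradientAt h (g y) y)
    {L : ℝ} (hL : 0 ≤ L) (lip : ∀ a b, ‖g a - g b‖ ≤ L * ‖a - b‖) (y w : E) :
    h w ≤ h y + ⟪g y, w - y⟫ + L / 2 * ‖w - y‖ ^ 2 := by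
  set d := w - y with hd
  have hcont : Continuous fun t : ℝ => (⟪g (y + t • d), d⟫ : ℝ) := by
    apply Continuous.inner
    · exact (g_cont lip).comp (by continuity)
    · exact continuous_const
  have key : h (y + (1:ℝ) • d) - h (y + (0:ℝ) • d)
      = ∫ t in (0:ℝ)..1, ⟪g (y + t • d), d⟫ := by
    refine (intervalIntegral.integral_eq_sub_of_hasDerivAt (fun t _ => comp_grad_deriv hg y d t) ?_).symm
    exact hcont.intervalIntegrable 0 1
  have hbound : ∀ t ∈ Icc (0:ℝ) 1, (⟪g (y + t • d), d⟫ : ℝ) ≤ ⟪g y, d⟫ + t * (L * ‖d‖ ^ 2) := by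
    intro t ht
    have h1 : (⟪g (y + t • d), d⟫ : ℝ) = ⟪g y, d⟫ + ⟪g (y + t • d) - g y, d⟫ := by
      rw [inner_sub_left]; ring
    have h2 : (⟪g (y + t • d) - g y, d⟫ : ℝ) ≤ ‖g (y + t • d) - g y‖ * ‖d‖ :=
      real_inner_le_norm _ _
    have h3 : ‖g (y + t • d) - g y‖ ≤ L * (t * ‖d‖) := by
      have := lip (y + t • d) y
      simpa [norm_smul, abs_of_nonneg ht.1] using this
    have h4 : ‖g (y + t • d) - g y‖ * ‖d‖ ≤ L * (t * ‖d‖) * ‖d‖ :=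
      mul_le_mul_of_nonneg_right h3 (norm_nonneg _)
    rw [h1]; nlinarith [norm_nonneg d]
  have hint : (∫ t in (0:ℝ)..1, ⟪g (y + t • d), d⟫)
      ≤ ∫ t in (0:ℝ)..1, (⟪g y, d⟫ + t * (L * ‖d‖ ^ 2)) := by
    apply intervalIntegral.integral_mono_on (by norm_num)
      (hcont.intervalIntegrable 0 1)
      ((continuous_const.add (continuous_id.mul continuous_const)).intervalIntegrable 0 1)
    intro t ht; exact hbound t ht
  have hval : (∫ t in (0:ℝ)..1, (⟪g y, d⟫ + t * (L * ‖d‖ ^ 2)))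
      = ⟪g y, d⟫ + L / 2 * ‖d‖ ^ 2 := by
    rw [intervalIntegral.integral_add (intervalIntegrable_const)
      ((intervalIntegral.intervalIntegrable_id).mul_const _)]
    simp [intervalIntegral.integral_mul_const, integral_id]
    ring
  have := key
  simp only [one_smul, zero_smul, add_zero] at this
  have : h (y + d) - h y ≤ ⟪g y, d⟫ + L / 2 * ‖d‖ ^ 2 := by
    rw [this]; rw [hval] at hint; exact hint
  have hyd : y + d = w := by rw [hd]; abel
  rw [hyd] at this; linarith

end
section
variable {E : Type*} [NormedAddCommGroup E] [InnerProductSpace ℝ E] [CompleteSpace E]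
set_option linter.unusedSectionVars false

/-- Gradient inequality for a function satisfying the segment convexity inequality. -/
lemma grad_lower {h : E → ℝ} {g : E → E} (hg : ∀ y, HasGradientAt h (g y) y)
    (hconv : ∀ y w : E, ∀ t : ℝ, 0 ≤ t → t ≤ 1 → h (y + t • (w - y)) ≤ (1 - t) * h y + t * h w)
    (y w : E) : h y + ⟪g y, w - y⟫ ≤ h w := by
  set d := w - y with hd
  set ψ : ℝ → ℝ := fun t => h (y + t • d) with hψ
  have hder : HasDerivAt ψ ⟪g y, d⟫ 0 := by
    simpa using comp_grad_deriv hg y d 0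
  have hslope : Tendsto (slope ψ 0) (𝓝[>] (0:ℝ)) (𝓝 ⟪g y, d⟫) := by
    have := hder.hasDerivWithinAt (s := Ioi 0)
    have h2 := (hasDerivWithinAt_iff_tendsto_slope.1 this)
    have hsub : Ioi (0:ℝ) \ {0} = Ioi 0 := by simp [diff_singleton_eq_self]
    rwa [hsub] at h2
  have hub : ∀ᶠ t in 𝓝[>] (0:ℝ), slope ψ 0 t ≤ h w - h y := by
    filter_upwards [Ioc_mem_nhdsGT_of_mem (by norm_num : (0:ℝ) ∈ Ico (0:ℝ) 1)] with t ht
    have hc := hconv y w t (le_of_lt ht.1) ht.2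
    have : ψ t - ψ 0 ≤ t * (h w - h y) := by
      simp only [hψ, zero_smul, add_zero]
      nlinarith [hc]
    rw [slope_def_field, div_le_iff₀ (by linarith [ht.1] : (0:ℝ) < t - 0)]
    simp only [sub_zero]
    linarith [this]
  have := le_of_tendsto hslope hub
  linarith [this]

/-- Baillon–Haddad style co-coercivity. -/
lemma cocoercive {h : E → ℝ} {g : E → E} (hg : ∀ y, HasGradientAt h (g y) y)
    {μ : ℝ} (hμ : 0 < μ) (lip : ∀ a b, ‖g a - g b‖ ≤ (1/μ) * ‖a - b‖)
    (hconv : ∀ y w : E, ∀ t : ℝ, 0 ≤ t → t ≤ 1 → h (y + t • (w - y)) ≤ (1 - t) * h y + t * h w)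
    (y w : E) : μ * ‖g y - g w‖ ^ 2 ≤ ⟪g y - g w, y - w⟫ := by
  have hL : (0:ℝ) ≤ 1/μ := by positivity
  have key : ∀ a b : E, h a + ⟪g a, b - a⟫ + μ / 2 * ‖g b - g a‖ ^ 2 ≤ h b := by
    intro a b
    set u := g b - g a with hu
    set b' := b - μ • u with hb'
    have h1 := grad_lower hg hconv a b'
    have h2 := descent hg hL lip b b'
    have e1 : (⟪g a, b' - a⟫ : ℝ) = ⟪g a, b - a⟫ - μ * ⟪g a, u⟫ := by
      rw [hb']
      have : b - μ • u - a = (b - a) - μ • u := by abel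
      rw [this, inner_sub_right, real_inner_smul_right]
    have e2 : (⟪g b, b' - b⟫ : ℝ) = - (μ * ⟪g b, u⟫) := by
      rw [hb']
      have : b - μ • u - b = -(μ • u) := by abel
      rw [this, inner_neg_right, real_inner_smul_right]
    have e3 : ‖b' - b‖ ^ 2 = μ ^ 2 * ‖u‖ ^ 2 := by
      rw [hb']
      have : b - μ • u - b = -(μ • u) := by abel
      rw [this, norm_neg, norm_smul, mul_pow]
      simp [abs_of_pos hμ]
    have e4 : (⟪g b, u⟫ : ℝ) - ⟪g a, u⟫ = ‖u‖ ^ 2 := by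
      rw [← inner_sub_left, ← hu, real_inner_self_eq_norm_sq]
    rw [e1] at h1
    rw [e2, e3] at h2
    have hμne : μ ≠ 0 := ne_of_gt hμ
    have : 1 / μ / 2 * (μ ^ 2 * ‖u‖ ^ 2) = μ / 2 * ‖u‖ ^ 2 := by
      field_simp
    rw [this] at h2
    nlinarith [h1, h2, e4]
  have k1 := key y w
  have k2 := key w y
  have e5 : ‖g y - g w‖ = ‖g w - g y‖ := norm_sub_rev _ _
  have e6 : (⟪g y, w - y⟫ : ℝ) + ⟪g w, y - w⟫ = - ⟪g y - g w, y - w⟫ := by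
    rw [inner_sub_left]
    have : (⟪g y, w - y⟫ : ℝ) = - ⟪g y, y - w⟫ := by
      rw [← inner_neg_right]; congr 1; abel
    rw [this]; ring
  have e5' : ‖g w - g y‖ ^ 2 = ‖g y - g w‖ ^ 2 := by rw [← e5]
  rw [e5'] at k1
  linarith [k1, k2, e6]

end
section
variable {E : Type*} [NormedAddCommGroup E] [InnerProductSpace ℝ E] [CompleteSpace E]
set_option linter.unusedSectionVars false

lemma conj_term_le {φ : E → EReal} {φs : E → ℝ}
    (hconj : ∀ y, (φs y : EReal) = ⨆ z, (((⟪z, y⟫ : ℝ) : EReal) - φ z))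
    (z u : E) {c : ℝ} (hc : φ z = (c : EReal)) : ⟪z, u⟫ - c ≤ φs u := by
  have h1 : (((⟪z, u⟫ : ℝ) : EReal) - φ z) ≤ (φs u : EReal) := by
    rw [hconj u]; exact le_iSup (fun z => (((⟪z, u⟫ : ℝ) : EReal) - φ z)) z
  rw [hc, ← EReal.coe_sub] at h1
  exact_mod_cast h1

lemma conj_convex {φ : E → EReal} (hφ_nonneg : ∀ z, 0 ≤ φ z) {φs : E → ℝ}
    (hconj : ∀ y, (φs y : EReal) = ⨆ z, (((⟪z, y⟫ : ℝ) : EReal) - φ z)) :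
    ∀ y w : E, ∀ t : ℝ, 0 ≤ t → t ≤ 1 →
      φs (y + t • (w - y)) ≤ (1 - t) * φs y + t * φs w := by
  intro y w t ht0 ht1
  set p := y + t • (w - y) with hp
  have key : (φs p : EReal) ≤ (((1 - t) * φs y + t * φs w : ℝ) : EReal) := by
    rw [hconj p]
    apply iSup_le
    intro z
    by_cases hz : φ z = ⊤
    · rw [hz, EReal.sub_top]; exact bot_le
    · have hzb : φ z ≠ ⊥ := ne_of_gt (lt_of_lt_of_le (by simp : (⊥:EReal) < 0) (hφ_nonneg z))
      obtain ⟨c, hc⟩ : ∃ c : ℝ, φ z = (c : EReal) := ⟨(φ z).toReal, (EReal.coe_toReal hz hzb).symm⟩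
      rw [hc, ← EReal.coe_sub, EReal.coe_le_coe_iff]
      have ha := conj_term_le hconj z y hc
      have hb := conj_term_le hconj z w hc
      have hip : (⟪z, p⟫ : ℝ) = ⟪z, y⟫ + t * (⟪z, w⟫ - ⟪z, y⟫) := by
        rw [hp, inner_add_right, real_inner_smul_right, inner_sub_right]
      rw [hip]
      nlinarith [mul_le_mul_of_nonneg_left ha (by linarith : (0:ℝ) ≤ 1 - t),
        mul_le_mul_of_nonneg_left hb ht0]
  exact_mod_cast key

end
set_option maxHeartbeats 2000000 in
theorem stmt_2 (n : ℕ)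
    (f : EuclideanSpace ℝ (Fin n) → ℝ) (f' : EuclideanSpace ℝ (Fin n) → EuclideanSpace ℝ (Fin n))
    (hf : ContDiff ℝ 2 f)
    (hf' : ∀ z, HasGradientAt f (f' z) z)
    (hf_lb : ∀ α : ℝ, Bornology.IsBounded {z | f z ≤ α})
    (φ : EuclideanSpace ℝ (Fin n) → EReal)
    (hφ_proper : ∃ z, φ z ≠ ⊤)
    (hφ_lsc : LowerSemicontinuous φ)
    (hφ_nonneg : ∀ z, 0 ≤ φ z)
    (hφ_even : ∀ z, φ (-z) = φ z)
    (hφ_zero : φ 0 = 0)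
    (hφ_es_dom : (interior {z | φ z ≠ ⊤}).Nonempty)
    (hφ_es_diff : DifferentiableOn ℝ (fun z => (φ z).toReal) (interior {z | φ z ≠ ⊤}))
    (hφ_es_blow : ∀ w ∈ frontier {z | φ z ≠ ⊤}, ∀ seq : ℕ → EuclideanSpace ℝ (Fin n),
      (∀ k, seq k ∈ interior {z | φ z ≠ ⊤}) → Tendsto seq atTop (𝓝 w) →
      Tendsto (fun k => ‖gradient (fun z => (φ z).toReal) (seq k)‖) atTop atTop)
    (μφ : ℝ) (hμφ : 0 < μφ)
    (hφ_sconv : ∀ z w : EuclideanSpace ℝ (Fin n), ∀ t : ℝ, 0 ≤ t → t ≤ 1 →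
      φ (t • z + (1 - t) • w) + ((μφ / 2 * (t * (1 - t)) * ‖z - w‖ ^ 2 : ℝ) : EReal)
        ≤ (t : EReal) * φ z + ((1 - t : ℝ) : EReal) * φ w)
    (φs : EuclideanSpace ℝ (Fin n) → ℝ)
    (hφs_conj : ∀ y, (φs y : EReal) = ⨆ z, (((⟪z, y⟫ : ℝ) : EReal) - φ z))
    (gφs : EuclideanSpace ℝ (Fin n) → EuclideanSpace ℝ (Fin n))
    (hgφs : ∀ y, HasGradientAt φs (gφs y) y)
    (hg_lip : ∀ y w, ‖gφs y - gφs w‖ ≤ (1 / μφ) * ‖y - w‖)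
    (hg_zero : gφs 0 = 0)
    (x₀ : EuclideanSpace ℝ (Fin n)) (x : ℝ → EuclideanSpace ℝ (Fin n))
    (hx_init : x 0 = x₀)
    (hode : ∀ t ∈ Ici (0:ℝ), HasDerivWithinAt x (-gφs (f' (x t))) (Ici 0) t)
    (hφ_C2 : ContDiffOn ℝ 2 (fun z => (φ z).toReal) (interior {z | φ z ≠ ⊤}))
    :
    Tendsto (fun t => -gφs (f' (x t))) atTop (𝓝 0) := by
  classical
  have hcoco : ∀ y, μφ * ‖gφs y‖ ^ 2 ≤ ⟪gφs y, y⟫ := by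
    intro y
    have h := cocoercive hgφs hμφ hg_lip (conj_convex hφ_nonneg hφs_conj) y 0
    simpa [hg_zero] using h
  set v : ℝ → EuclideanSpace ℝ (Fin n) := fun t => -gφs (f' (x t)) with hv
  set F : ℝ → ℝ := fun t => f (x t) with hF
  have hFder : ∀ t ∈ Ici (0:ℝ),
      HasDerivWithinAt F (-⟪f' (x t), gφs (f' (x t))⟫) (Ici 0) t := by
    intro t ht
    have h := (hf' (x t)).hasFDerivAt.comp_hasDerivWithinAt t (hode t ht)
    simpa [InnerProductSpace.toDual_apply_apply, inner_neg_right, Function.comp_def] using h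
  have hF'le : ∀ t, -⟪f' (x t), gφs (f' (x t))⟫ ≤ -(μφ * ‖v t‖ ^ 2) := by
    intro t
    have h1 := hcoco (f' (x t))
    have h2 : (⟪gφs (f' (x t)), f' (x t)⟫ : ℝ) = ⟪f' (x t), gφs (f' (x t))⟫ :=
      real_inner_comm _ _
    have hnv : ‖v t‖ = ‖gφs (f' (x t))‖ := by simp [hv]
    rw [hnv]; linarith
  have hFcont : ContinuousOn F (Ici 0) := fun t ht => (hFder t ht).continuousWithinAt
  have hFanti : AntitoneOn F (Ici 0) := by
    apply antitoneOn_of_hasDerivWithinAt_nonpos (convex_Ici 0) hFcont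
      (f' := fun t => -⟪f' (x t), gφs (f' (x t))⟫)
    · intro s hs
      exact (hFder s (interior_subset hs)).mono interior_subset
    · intro s hs
      have h1 := hF'le s
      nlinarith [sq_nonneg ‖v s‖, norm_nonneg (v s)]
  set K := {z | f z ≤ F 0} with hK
  have hK_cl : IsClosed K := isClosed_le hf.continuous continuous_const
  have hK_cpt : IsCompact K := Metric.isCompact_of_isClosed_isBounded hK_cl (hf_lb (F 0))
  have hx0K : x 0 ∈ K := by simp only [hK, mem_setOf_eq, hF]; exact le_rfl
  have hxtK : ∀ t ∈ Ici (0:ℝ), x t ∈ K := fun t ht =>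
    hFanti self_mem_Ici ht ht
  obtain ⟨R, hR⟩ := (hf_lb (F 0)).subset_closedBall 0
  set B := Metric.closedBall (0 : EuclideanSpace ℝ (Fin n)) R with hB
  have hB_cpt : IsCompact B := isCompact_closedBall _ _
  have hB_conv : Convex ℝ B := convex_closedBall _ _
  have hxB : ∀ t ∈ Ici (0:ℝ), x t ∈ B := fun t ht => hR (hxtK t ht)
  have hfd_eq : ∀ z, fderiv ℝ f z = InnerProductSpace.toDual ℝ _ (f' z) := fun z =>
    (hf' z).hasFDerivAt.fderiv
  have hfd1 : ContDiff ℝ 1 (fderiv ℝ f) := hf.fderiv_right (by norm_num)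
  obtain ⟨C₀, hC₀⟩ := hB_cpt.exists_bound_of_continuousOn hfd1.continuous.continuousOn
  have hf'_bd : ∀ z ∈ B, ‖f' z‖ ≤ C₀ := by
    intro z hz
    have he : ‖f' z‖ = ‖fderiv ℝ f z‖ := by
      rw [hfd_eq z, LinearIsometryEquiv.norm_map]
    rw [he]; exact hC₀ z hz
  obtain ⟨M₀, hM₀⟩ := hB_cpt.exists_bound_of_continuousOn
    ((hfd1.continuous_fderiv one_ne_zero).continuousOn)
  set M := max M₀ 0 with hM
  have hM0 : 0 ≤ M := le_max_right _ _
  have hf'_lip : ∀ a ∈ B, ∀ b ∈ B, ‖f' a - f' b‖ ≤ M * ‖a - b‖ := by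
    intro a ha b hb
    have h1 : ‖fderiv ℝ f a - fderiv ℝ f b‖ ≤ M * ‖a - b‖ :=
      hB_conv.norm_image_sub_le_of_norm_hasFDerivWithin_le
        (fun z _ => ((hfd1.differentiable one_ne_zero) z).hasFDerivAt.hasFDerivWithinAt)
        (fun z hz => le_trans (hM₀ z hz) (le_max_left _ _)) hb ha
    calc ‖f' a - f' b‖ = ‖fderiv ℝ f a - fderiv ℝ f b‖ := by
          rw [hfd_eq a, hfd_eq b, ← map_sub, LinearIsometryEquiv.norm_map]
      _ ≤ M * ‖a - b‖ := h1
  have hC₀0 : 0 ≤ C₀ := le_trans (norm_nonneg _) (hf'_bd (x 0) (hxB 0 self_mem_Ici))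
  set C := (1/μφ) * C₀ with hC
  have hC0 : 0 ≤ C := by positivity
  have hspeed : ∀ t ∈ Ici (0:ℝ), ‖-gφs (f' (x t))‖ ≤ C := by
    intro t ht
    rw [norm_neg]
    have h1 : ‖gφs (f' (x t)) - gφs 0‖ ≤ (1/μφ) * ‖f' (x t) - 0‖ := hg_lip _ _
    rw [hg_zero, sub_zero, sub_zero] at h1
    have h2 := hf'_bd (x t) (hxB t ht)
    calc ‖gφs (f' (x t))‖ ≤ (1/μφ) * ‖f' (x t)‖ := h1
      _ ≤ (1/μφ) * C₀ := by
          apply mul_le_mul_of_nonneg_left h2; positivity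
  have hx_lip : ∀ s ∈ Ici (0:ℝ), ∀ t ∈ Ici (0:ℝ), ‖x t - x s‖ ≤ C * |t - s| := by
    intro s hs t ht
    have h := Convex.norm_image_sub_le_of_norm_hasDerivWithin_le hode
      (fun r hr => hspeed r hr) (convex_Ici 0) hs ht
    simpa [Real.norm_eq_abs] using h
  set Lv := max ((1/μφ) * (M * C)) 1 with hLv
  have hLv0 : (0:ℝ) < Lv := lt_of_lt_of_le one_pos (le_max_right _ _)
  have hv_lip : ∀ s ∈ Ici (0:ℝ), ∀ t ∈ Ici (0:ℝ), ‖v t - v s‖ ≤ Lv * |t - s| := by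
    intro s hs t ht
    have h1 : v t - v s = -(gφs (f' (x t)) - gφs (f' (x s))) := by
      simp only [hv]; abel
    have h2 : ‖v t - v s‖ = ‖gφs (f' (x t)) - gφs (f' (x s))‖ := by rw [h1, norm_neg]
    have h3 := hg_lip (f' (x t)) (f' (x s))
    have h4 := hf'_lip (x t) (hxB t ht) (x s) (hxB s hs)
    have h5 := hx_lip s hs t ht
    have hμinv : (0:ℝ) ≤ 1/μφ := by positivity
    calc ‖v t - v s‖ = ‖gφs (f' (x t)) - gφs (f' (x s))‖ := h2
      _ ≤ (1/μφ) * ‖f' (x t) - f' (x s)‖ := h3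
      _ ≤ (1/μφ) * (M * ‖x t - x s‖) := by
          apply mul_le_mul_of_nonneg_left h4 hμinv
      _ ≤ (1/μφ) * (M * (C * |t - s|)) := by
          apply mul_le_mul_of_nonneg_left
            (mul_le_mul_of_nonneg_left h5 hM0) hμinv
      _ = ((1/μφ) * (M * C)) * |t - s| := by ring
      _ ≤ Lv * |t - s| := by
          apply mul_le_mul_of_nonneg_right (le_max_left _ _) (abs_nonneg _)
  obtain ⟨zm, hzm, hzmin⟩ := hK_cpt.exists_isMinOn ⟨x 0, hx0K⟩ hf.continuous.continuousOn
  set m := f zm with hm_def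
  have hm : ∀ t ∈ Ici (0:ℝ), m ≤ F t := fun t ht => hzmin (hxtK t ht)
  by_contra hnot
  rw [Metric.tendsto_atTop] at hnot
  push_neg at hnot
  obtain ⟨ε, hε, hbad⟩ := hnot
  set δ := ε / (2 * Lv) with hδ_def
  have hδ : 0 < δ := by positivity
  set c' := μφ * (ε/2)^2 with hc'_def
  set c := c' * δ with hc_def
  have hc'0 : 0 < c' := by positivity
  have hc : 0 < c := by positivity
  have hdec : ∀ T ∈ Ici (0:ℝ), ε ≤ ‖v T‖ → F (T + δ) ≤ F T - c := by
    intro T hT hvT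
    have hvlow : ∀ s ∈ Icc T (T + δ), ε/2 ≤ ‖v s‖ := by
      intro s hs
      have hs0 : s ∈ Ici (0:ℝ) := le_trans hT hs.1
      have h1 := hv_lip T hT s hs0
      have h2 : |s - T| ≤ δ := by
        rw [abs_of_nonneg (by linarith [hs.1] : (0:ℝ) ≤ s - T)]
        linarith [hs.2]
      have h3 : ‖v s - v T‖ ≤ Lv * δ :=
        le_trans h1 (mul_le_mul_of_nonneg_left h2 (le_of_lt hLv0))
      have h4 : Lv * δ = ε/2 := by
        rw [hδ_def]; field_simp
      have h5 : ‖v T‖ - ‖v s‖ ≤ ‖v T - v s‖ := norm_sub_norm_le _ _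
      have h6 : ‖v T - v s‖ = ‖v s - v T‖ := norm_sub_rev _ _
      linarith
    set G : ℝ → ℝ := fun s => F s + c' * s with hG_def
    have hIccIci : Icc T (T + δ) ⊆ Ici (0:ℝ) := fun r hr => le_trans hT hr.1
    have hG : AntitoneOn G (Icc T (T + δ)) := by
      apply antitoneOn_of_hasDerivWithinAt_nonpos (convex_Icc _ _)
        ((hFcont.mono hIccIci).add (continuous_const.mul continuous_id).continuousOn)
        (f' := fun s => -⟪f' (x s), gφs (f' (x s))⟫ + c')
      · intro s hs
        rw [interior_Icc] at hs ⊢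
        have hs0 : s ∈ Ici (0:ℝ) := le_trans hT (le_of_lt hs.1)
        have h1 : HasDerivWithinAt F (-⟪f' (x s), gφs (f' (x s))⟫) (Ioo T (T + δ)) s :=
          (hFder s hs0).mono (fun r hr => le_trans hT (le_of_lt hr.1))
        have h2 : HasDerivWithinAt (fun s : ℝ => c' * s) c' (Ioo T (T + δ)) s := by
          simpa using (((hasDerivAt_id s).const_mul c').hasDerivWithinAt
            (s := Ioo T (T + δ)))
        exact h1.add h2
      · intro s hs
        rw [interior_Icc] at hs
        have h1 := hF'le s
        have h2 := hvlow s (Ioo_subset_Icc_self hs)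
        have h3 : (ε/2)^2 ≤ ‖v s‖^2 := by nlinarith [norm_nonneg (v s)]
        have h4 : μφ * (ε/2)^2 ≤ μφ * ‖v s‖^2 :=
          mul_le_mul_of_nonneg_left h3 (le_of_lt hμφ)
        simp only [hc'_def]
        linarith
    have hTT : T ∈ Icc T (T + δ) := ⟨le_rfl, by linarith⟩
    have hTd : T + δ ∈ Icc T (T + δ) := ⟨by linarith, le_rfl⟩
    have hGle := hG hTT hTd (by linarith)
    simp only [hG_def] at hGle
    have : c = c' * δ := hc_def
    linarith
  have hstep : ∀ T : ℝ, ∃ t, max T 0 ≤ t ∧ ε ≤ ‖v t‖ := by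
    intro T
    obtain ⟨t, ht1, ht2⟩ := hbad (max T 0)
    refine ⟨t, ht1, ?_⟩
    simpa [dist_zero_right] using ht2
  choose T hT1 hT2 using hstep
  set u : ℕ → ℝ := fun k => Nat.rec (T 0) (fun _ prev => T (prev + δ)) k with hu_def
  have hu0 : ∀ k, 0 ≤ u k := by
    intro k
    cases k with
    | zero => exact le_trans (le_max_right _ _) (hT1 0)
    | succ k => exact le_trans (le_max_right _ _) (hT1 _)
  have husucc : ∀ k, u k + δ ≤ u (k + 1) := fun k =>
    le_trans (le_max_left _ _) (hT1 (u k + δ))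
  have huv : ∀ k, ε ≤ ‖v (u k)‖ := by
    intro k
    cases k with
    | zero => exact hT2 0
    | succ k => exact hT2 _
  have hiter : ∀ k : ℕ, F (u k) ≤ F (u 0) - k * c := by
    intro k
    induction k with
    | zero => simp
    | succ k ih =>
      have h1 := hdec (u k) (hu0 k) (huv k)
      have h2 : F (u (k+1)) ≤ F (u k + δ) :=
        hFanti (by simp only [mem_Ici]; linarith [hu0 k, le_of_lt hδ])
          (hu0 (k+1)) (husucc k)
      push_cast
      linarith
  obtain ⟨N, hN⟩ := exists_nat_gt ((F (u 0) - m) / c)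
  have h1 := hiter N
  have h2 := hm (u N) (hu0 N)
  have h3 : F (u 0) - m < N * c := by
    rw [div_lt_iff₀ hc] at hN; linarith
  linarith
end

section
/- Let f additionally be convex and let φ = h ∘ ‖·‖ be isotropic, and let x⋆ be a minimizer of f. Let x : [0, ∞) → ℝⁿ be the unique global solution of ẋ(t) = −∇φ*(∇f(x(t))) with x(0) = x₀. Then (d/dt)(½‖x(t) − x⋆‖²) ≤ (h*′(‖∇f(x(t))‖)/‖∇f(x(t))‖) · (f⋆ − f(x(t))) ≤ 0 for all t; in particular t ↦ ‖x(t) − x⋆‖ is nonincreasing on [0, ∞). -/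
open MeasureTheory Filter Topology Set
open scoped RealInnerProductSpace

noncomputable section


/-- Gradient inequality for convex functions. -/
lemma grad_ineq {n : ℕ} {f : EuclideanSpace ℝ (Fin n) → ℝ}
    (hf_conv : ConvexOn ℝ Set.univ f) {g x : EuclideanSpace ℝ (Fin n)}
    (hg : HasGradientAt f g x) (z : EuclideanSpace ℝ (Fin n)) :
    ⟪g, z - x⟫ ≤ f z - f x := by
  set L : ℝ →ᵃ[ℝ] EuclideanSpace ℝ (Fin n) := AffineMap.lineMap x z
  have hconv : ConvexOn ℝ Set.univ (f ∘ L) := by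
    simpa using hf_conv.comp_affineMap L
  have hL : ∀ t : ℝ, L t = x + t • (z - x) := fun t => by
    simp [L, AffineMap.lineMap_apply]; module
  have hline : HasDerivAt (fun t : ℝ => L t) (z - x) 0 := by
    simp only [hL]
    simpa using ((hasDerivAt_id (0:ℝ)).smul_const (z - x)).const_add x
  have hx0 : (L : ℝ → EuclideanSpace ℝ (Fin n)) 0 = x := by simp [hL]
  have hcomp : HasDerivAt (f ∘ L) ⟪g, z - x⟫ 0 := by
    have hg' : HasFDerivAt f ((InnerProductSpace.toDual ℝ _) g)
        ((L : ℝ → EuclideanSpace ℝ (Fin n)) 0) := hx0 ▸ hg.hasFDerivAt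
    have := hg'.comp_hasDerivAt 0 hline
    simpa using this
  have hslope := hconv.le_slope_of_hasDerivAt (mem_univ (0:ℝ)) (mem_univ (1:ℝ))
    one_pos hcomp
  have : slope (f ∘ L) 0 1 = f z - f x := by
    simp [slope, hL, L]
  linarith [hslope.trans_eq this]

/-- Derivative of a strictly monotone (on Ici 0) function is nonneg at r > 0. -/
lemma deriv_nonneg_of_strictMonoOn {hs hs' : ℝ → ℝ}
    (hd : ∀ r : ℝ, HasDerivAt hs (hs' r) r)
    (hm : StrictMonoOn hs (Ici (0:ℝ))) {r : ℝ} (hr : 0 < r) : 0 ≤ hs' r := by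
  have h1 : HasDerivWithinAt hs (hs' r) (Ioi r) r := (hd r).hasDerivWithinAt
  rw [hasDerivWithinAt_iff_tendsto_slope' (notMem_Ioi.mpr le_rfl)] at h1
  refine ge_of_tendsto h1 ?_
  filter_upwards [self_mem_nhdsWithin] with s hse
  have hrs : r < s := hse
  have := hm (le_of_lt hr) (le_of_lt (hr.trans hrs)) hrs
  rw [slope_def_field]
  exact div_nonneg (by linarith) (by linarith)

theorem stmt_10 (n : ℕ)
    (f : EuclideanSpace ℝ (Fin n) → ℝ) (f' : EuclideanSpace ℝ (Fin n) → EuclideanSpace ℝ (Fin n))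
    (hf : ContDiff ℝ 2 f)
    (hf' : ∀ z, HasGradientAt f (f' z) z)
    (hf_lb : ∀ α : ℝ, Bornology.IsBounded {z | f z ≤ α})
    (hf_conv : ConvexOn ℝ Set.univ f)
    (h : ℝ → EReal)
    (hh_proper : ∃ r, h r ≠ ⊤)
    (hh_lsc : LowerSemicontinuous h)
    (hh_nonneg : ∀ r, 0 ≤ h r)
    (hh_even : ∀ r, h (-r) = h r)
    (hh_zero : h 0 = 0)
    (hh_es_dom : (interior {r | h r ≠ ⊤}).Nonempty)
    (hh_es_diff : DifferentiableOn ℝ (fun r => (h r).toReal) (interior {r | h r ≠ ⊤}))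
    (hh_es_blow : ∀ w ∈ frontier {r | h r ≠ ⊤}, ∀ seq : ℕ → ℝ,
      (∀ k, seq k ∈ interior {r | h r ≠ ⊤}) → Tendsto seq atTop (𝓝 w) →
      Tendsto (fun k => ‖deriv (fun r => (h r).toReal) (seq k)‖) atTop atTop)
    (μφ : ℝ) (hμφ : 0 < μφ)
    (hh_sconv : ∀ r s t : ℝ, 0 ≤ t → t ≤ 1 →
      h (t * r + (1 - t) * s) + ((μφ / 2 * (t * (1 - t)) * |r - s| ^ 2 : ℝ) : EReal)
        ≤ (t : EReal) * h r + ((1 - t : ℝ) : EReal) * h s)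
    (hs hs' : ℝ → ℝ)
    (hhs_conj : ∀ y : EuclideanSpace ℝ (Fin n),
      ((hs ‖y‖ : ℝ) : EReal) = ⨆ z : EuclideanSpace ℝ (Fin n), (((⟪z, y⟫ : ℝ) : EReal) - h ‖z‖))
    (hhs_deriv : ∀ r : ℝ, HasDerivAt hs (hs' r) r)
    (hhs_mono : StrictMonoOn hs (Ici (0:ℝ)))
    (gφs : EuclideanSpace ℝ (Fin n) → EuclideanSpace ℝ (Fin n))
    (hg_iso : ∀ y : EuclideanSpace ℝ (Fin n), y ≠ 0 → gφs y = (hs' ‖y‖ / ‖y‖) • y)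
    (hg_zero : gφs 0 = 0)
    (hgφs : ∀ y, HasGradientAt (fun z : EuclideanSpace ℝ (Fin n) => hs ‖z‖) (gφs y) y)
    (xstar : EuclideanSpace ℝ (Fin n)) (hxstar : ∀ z, f xstar ≤ f z)
    (x₀ : EuclideanSpace ℝ (Fin n)) (x : ℝ → EuclideanSpace ℝ (Fin n))
    (hx_init : x 0 = x₀)
    (hode : ∀ t ∈ Ici (0:ℝ), HasDerivWithinAt x (-gφs (f' (x t))) (Ici 0) t)
    :
    (∀ t ∈ Ici (0:ℝ),
        HasDerivWithinAt (fun s => 1 / 2 * ‖x s - xstar‖ ^ 2)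
          ⟪x t - xstar, -gφs (f' (x t))⟫ (Ici 0) t ∧
          ⟪x t - xstar, -gφs (f' (x t))⟫
            ≤ hs' ‖f' (x t)‖ / ‖f' (x t)‖ * ((⨅ z, f z) - f (x t)) ∧
          hs' ‖f' (x t)‖ / ‖f' (x t)‖ * ((⨅ z, f z) - f (x t)) ≤ 0) ∧
      AntitoneOn (fun t => ‖x t - xstar‖) (Ici 0) := by
  -- infimum equals f xstar
  have hbdd : BddBelow (Set.range f) := ⟨f xstar, by rintro _ ⟨z, rfl⟩; exact hxstar z⟩
  have hinf : (⨅ z, f z) = f xstar :=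
    le_antisymm (ciInf_le hbdd xstar) (le_ciInf hxstar)
  have key : ∀ t ∈ Ici (0:ℝ),
      HasDerivWithinAt (fun s => 1 / 2 * ‖x s - xstar‖ ^ 2)
        ⟪x t - xstar, -gφs (f' (x t))⟫ (Ici 0) t ∧
        ⟪x t - xstar, -gφs (f' (x t))⟫
          ≤ hs' ‖f' (x t)‖ / ‖f' (x t)‖ * ((⨅ z, f z) - f (x t)) ∧
        hs' ‖f' (x t)‖ / ‖f' (x t)‖ * ((⨅ z, f z) - f (x t)) ≤ 0 := by
    intro t ht
    set y := f' (x t) with hy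
    set v := -gφs y with hv
    -- derivative claim
    have hu : HasDerivWithinAt (fun s => x s - xstar) v (Ici 0) t :=
      (hode t ht).sub_const xstar
    have hinner : HasDerivWithinAt (fun s => ⟪x s - xstar, x s - xstar⟫)
        (⟪x t - xstar, v⟫ + ⟪v, x t - xstar⟫) (Ici 0) t := hu.inner ℝ hu
    have hder : HasDerivWithinAt (fun s => 1 / 2 * ‖x s - xstar‖ ^ 2)
        ⟪x t - xstar, v⟫ (Ici 0) t := by
      have := hinner.const_mul (1/2 : ℝ)
      have heq : (fun s => 1 / 2 * ⟪x s - xstar, x s - xstar⟫)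
          = (fun s => 1 / 2 * ‖x s - xstar‖ ^ 2) := by
        funext s; rw [real_inner_self_eq_norm_sq]
      rw [heq] at this
      refine this.congr_deriv ?_
      rw [real_inner_comm v (x t - xstar)]; ring
    refine ⟨hder, ?_, ?_⟩
    · -- main inequality
      rcases eq_or_ne y 0 with h0 | h0
      · rw [hv, h0, hg_zero]; simp
      · have hny : 0 < ‖y‖ := norm_pos_iff.mpr h0
        have hc : 0 ≤ hs' ‖y‖ / ‖y‖ :=
          div_nonneg (deriv_nonneg_of_strictMonoOn hhs_deriv hhs_mono hny) hny.le
        have hgi : ⟪y, xstar - x t⟫ ≤ f xstar - f (x t) :=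
          grad_ineq hf_conv (hf' (x t)) xstar
        have hrw : ⟪x t - xstar, v⟫ = hs' ‖y‖ / ‖y‖ * ⟪y, xstar - x t⟫ := by
          rw [hv, hg_iso y h0, inner_neg_right, real_inner_smul_right]
          simp only [inner_sub_left, inner_sub_right]
          rw [real_inner_comm (x t) y, real_inner_comm xstar y]
          ring
        rw [hrw, hinf]
        exact mul_le_mul_of_nonneg_left hgi hc
    · -- nonpositivity
      rcases eq_or_ne y 0 with h0 | h0
      · simp [h0]
      · have hny : 0 < ‖y‖ := norm_pos_iff.mpr h0
        have hc : 0 ≤ hs' ‖y‖ / ‖y‖ :=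
          div_nonneg (deriv_nonneg_of_strictMonoOn hhs_deriv hhs_mono hny) hny.le
        have : (⨅ z, f z) - f (x t) ≤ 0 := by
          rw [hinf]; linarith [hxstar (x t)]
        exact mul_nonpos_of_nonneg_of_nonpos hc this
  refine ⟨key, ?_⟩
  -- antitone
  have hF : AntitoneOn (fun s => 1 / 2 * ‖x s - xstar‖ ^ 2) (Ici 0) := by
    apply antitoneOn_of_hasDerivWithinAt_nonpos (convex_Ici 0)
      (f' := fun t => ⟪x t - xstar, -gφs (f' (x t))⟫)
    · intro t ht
      exact (key t ht).1.continuousWithinAt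
    · intro t ht
      rw [interior_Ici] at ht
      exact ((key t (Ioi_subset_Ici_self ht)).1.mono (by rw [interior_Ici]; exact Ioi_subset_Ici_self))
    · intro t ht
      rw [interior_Ici] at ht
      exact le_trans (key t (Ioi_subset_Ici_self ht)).2.1 (key t (Ioi_subset_Ici_self ht)).2.2
  intro a ha b hb hab
  have := hF ha hb hab
  have h2 : ‖x b - xstar‖ ^ 2 ≤ ‖x a - xstar‖ ^ 2 := by linarith
  exact (pow_le_pow_iff_left₀ (norm_nonneg _) (norm_nonneg _) two_ne_zero).mp h2
end
end
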